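/- Let $\Lambda : S^1 \to \mathbb{N}$ be a function on the unit circle which is continuous except at finitely many points, bounded, and nonnegative. Define $i_n := \sum_{z \in S^1, z^n = 1} \Lambda(z)$. Then $\lim_{n \to \infty} i_n / n = \frac{1}{2\pi} \int_{S^1} \Lambda(z)\, dz$ (the average of $\Lambda$ over the circle with respect to normalized Haar measure). -/

import Mathlib

open MeasureTheory

instance : Fact (0 < 2 * Real.pi) := ⟨by positivity⟩

/-! The normalized counting measures on the `n`-th roots of unity converge weakly to Haar
measure: tested against a continuous function, their integrals are left Riemann sums. A bounded
`ℕ`-valued function is a finite combination of indicators of its level sets, whose frontiers lie in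
the finite, hence Haar-null, set of discontinuities; the portmanteau theorem then gives the
convergence of the averages. -/

open Filter Topology
open scoped ENNReal

theorem abs_intervalIntegral_sub_mul_le {g : ℝ → ℝ} {a b ε : ℝ} (hab : a ≤ b)
    (hg : IntervalIntegrable g volume a b) (hε : ∀ x ∈ Set.Icc a b, |g x - g a| ≤ ε) :
    |(∫ x in a..b, g x) - (b - a) * g a| ≤ ε * (b - a) := by
  have h : (∫ x in a..b, g x) - (b - a) * g a = ∫ x in a..b, (g x - g a) := by
    rw [intervalIntegral.integral_sub hg intervalIntegrable_const,
      intervalIntegral.integral_const, smul_eq_mul]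
  rw [h, ← abs_of_nonneg (sub_nonneg.2 hab)]
  exact intervalIntegral.norm_integral_le_of_norm_le_const (f := fun x => g x - g a) fun x hx =>
    hε x (Set.Ioc_subset_Icc_self (Set.uIoc_of_le hab ▸ hx))

theorem abs_riemannSum_sub_integral_le {g : ℝ → ℝ} {a b ε : ℝ} {n : ℕ} (hn : n ≠ 0)
    (hab : a ≤ b) (hg : ContinuousOn g (Set.Icc a b))
    (hε : ∀ x ∈ Set.Icc a b, ∀ y ∈ Set.Icc a b, dist x y ≤ (b - a) / n → dist (g x) (g y) ≤ ε) :
    |(b - a) / n * (∑ k ∈ Finset.range n, g (a + k * ((b - a) / n))) - ∫ x in a..b, g x|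
      ≤ ε * (b - a) := by
  set h := (b - a) / n with h_def
  set x : ℕ → ℝ := fun k => a + k * h with x_def
  have hh : 0 ≤ h := div_nonneg (sub_nonneg.2 hab) n.cast_nonneg
  have hx_succ : ∀ k, x (k + 1) - x k = h := fun k => by simp only [x_def]; push_cast; ring
  have hx_n : x n = b := by simp only [x_def, h_def]; field_simp; ring
  have hx_mem : ∀ k ≤ n, x k ∈ Set.Icc a b := fun k hk => by
    refine ⟨le_add_of_nonneg_right (by positivity), hx_n ▸ ?_⟩
    simp only [x_def]; gcongr
  have hIcc : ∀ k < n, Set.Icc (x k) (x (k + 1)) ⊆ Set.Icc a b := fun k hk =>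
    Set.Icc_subset_Icc (hx_mem k hk.le).1 (hx_mem (k + 1) hk).2
  have hint : ∀ k < n, IntervalIntegrable g volume (x k) (x (k + 1)) := fun k hk =>
    (hg.mono (hIcc k hk)).intervalIntegrable_of_Icc (by linarith [hx_succ k])
  have hpiece : ∀ k < n, |h * g (x k) - ∫ t in x k..x (k + 1), g t| ≤ ε * h := fun k hk => by
    rw [abs_sub_comm, ← hx_succ k]
    refine abs_intervalIntegral_sub_mul_le (by linarith [hx_succ k]) (hint k hk) fun t ht => ?_
    refine hε t (hIcc k hk ht) (x k) (hx_mem k hk.le) ?_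
    rw [Real.dist_eq, abs_of_nonneg (by linarith [ht.1])]
    linarith [ht.2, hx_succ k]
  have hsplit : ∫ t in a..b, g t = ∑ k ∈ Finset.range n, ∫ t in x k..x (k + 1), g t := by
    rw [intervalIntegral.sum_integral_adjacent_intervals hint, hx_n]
    simp [x_def]
  change |h * ∑ k ∈ Finset.range n, g (x k) - _| ≤ _
  rw [hsplit, Finset.mul_sum, ← Finset.sum_sub_distrib]
  calc _ ≤ ∑ k ∈ Finset.range n, |h * g (x k) - ∫ t in x k..x (k + 1), g t| :=
        Finset.abs_sum_le_sum_abs _ _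
    _ ≤ ∑ k ∈ Finset.range n, ε * h :=
        Finset.sum_le_sum fun k hk => hpiece k (Finset.mem_range.1 hk)
    _ = ε * (b - a) := by
        rw [Finset.sum_const, Finset.card_range, nsmul_eq_mul, h_def]; field_simp

theorem tendsto_riemannSum_of_continuousOn {g : ℝ → ℝ} {a b : ℝ} (hab : a ≤ b)
    (hg : ContinuousOn g (Set.Icc a b)) :
    Tendsto (fun n : ℕ => (b - a) / n * ∑ k ∈ Finset.range n, g (a + k * ((b - a) / n)))
      atTop (𝓝 (∫ x in a..b, g x)) := by
  rw [Metric.tendsto_atTop]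
  intro ε hε
  have hba : 0 < b - a + 1 := by linarith
  obtain ⟨δ, hδ, hgδ⟩ := Metric.uniformContinuousOn_iff_le.1
    (isCompact_Icc.uniformContinuousOn_of_continuous hg) (ε / (b - a + 1)) (by positivity)
  obtain ⟨N, hN⟩ := exists_nat_gt ((b - a) / δ)
  refine ⟨N + 1, fun n hn => ?_⟩
  have hn0 : (0 : ℝ) < n := by exact_mod_cast (by omega : 0 < n)
  have hmesh : (b - a) / n ≤ δ := by
    rw [div_lt_iff₀ hδ] at hN
    rw [div_le_iff₀ hn0]
    have : (N : ℝ) ≤ n := by exact_mod_cast (by omega : N ≤ n)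
    nlinarith
  rw [Real.dist_eq]
  calc _ ≤ ε / (b - a + 1) * (b - a) :=
        abs_riemannSum_sub_integral_le (by omega) hab hg
          fun x hx y hy hxy => hgδ x hx y hy (hxy.trans hmesh)
    _ < ε := by
        rw [div_mul_eq_mul_div, div_lt_iff₀ hba]
        nlinarith

theorem frontier_preimage_subset_of_isClopen {X Y : Type*} [TopologicalSpace X]
    [TopologicalSpace Y] {f : X → Y} {s : Set Y} (hs : IsClopen s) :
    frontier (f ⁻¹' s) ⊆ {x | ¬ContinuousAt f x} := by
  intro x hx hfx
  by_cases hxs : f x ∈ s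
  · exact hx.2 (mem_interior_iff_mem_nhds.2 (hfx.preimage_mem_nhds (hs.isOpen.mem_nhds hxs)))
  · obtain ⟨y, hy, hy'⟩ := mem_closure_iff_nhds.1 hx.1 _
      (hfx.preimage_mem_nhds (hs.compl.isOpen.mem_nhds hxs))
    exact hy hy'

namespace MeasureTheory

theorem integral_natCast_eq_sum_measureReal {Ω : Type*} [MeasurableSpace Ω] (μ : Measure Ω)
    [IsFiniteMeasure μ] {f : Ω → ℕ} (hf : Measurable f) {C : ℕ} (hC : ∀ x, f x ≤ C) :
    ∫ x, (f x : ℝ) ∂μ = ∑ m ∈ Finset.range (C + 1), μ.real (f ⁻¹' {m}) * m := by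
  have hfiber : ∀ x, (f x : ℝ) =
      ∑ m ∈ Finset.range (C + 1), (f ⁻¹' {m}).indicator (fun _ => (m : ℝ)) x := fun x => by
    rw [Finset.sum_eq_single_of_mem (f x) (Finset.mem_range.2 (Nat.lt_succ_of_le (hC x)))]
    · simp
    · intro m _ hm
      simp [Ne.symm hm]
  simp_rw [hfiber]
  rw [integral_finsetSum _ fun m _ =>
    (integrable_const _).indicator (hf (measurableSet_singleton m))]
  simp [integral_indicator_const _ (hf (measurableSet_singleton _))]

theorem ProbabilityMeasure.tendsto_integral_natCast_of_ae_continuousAt {Ω ι : Type*}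
    [MeasurableSpace Ω] [TopologicalSpace Ω] [OpensMeasurableSpace Ω] [HasOuterApproxClosed Ω]
    {L : Filter ι} {μ : ProbabilityMeasure Ω} {μs : ι → ProbabilityMeasure Ω}
    (hμs : Tendsto μs L (𝓝 μ)) {f : Ω → ℕ} (hf : Measurable f) {C : ℕ} (hC : ∀ x, f x ≤ C)
    (hcont : ∀ᵐ x ∂(μ : Measure Ω), ContinuousAt f x) :
    Tendsto (fun i => ∫ x, (f x : ℝ) ∂(μs i : Measure Ω)) L
      (𝓝 (∫ x, (f x : ℝ) ∂(μ : Measure Ω))) := by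
  simp_rw [integral_natCast_eq_sum_measureReal _ hf hC]
  refine tendsto_finsetSum _ fun m _ => Tendsto.mul_const _ ?_
  have hfr : (μ : Measure Ω) (frontier (f ⁻¹' {m})) = 0 :=
    measure_mono_null (frontier_preimage_subset_of_isClopen (isClopen_discrete _)) (ae_iff.1 hcont)
  exact (ENNReal.tendsto_toReal (measure_ne_top _ _)).comp
    (ProbabilityMeasure.tendsto_measure_of_null_frontier_of_tendsto' hμs hfr)

end MeasureTheory

namespace AddCircle

/-- Under `t ↦ exp (2π i t / T)`, the atoms `k * T / n` are the `n`-th roots of unity. -/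
noncomputable def rootsOfUnityMeasure (T : ℝ) (n : ℕ) : Measure (AddCircle T) :=
  (n : ℝ≥0∞)⁻¹ • ∑ k ∈ Finset.range n, Measure.dirac ((k * T / n : ℝ) : AddCircle T)

instance (T : ℝ) (n : ℕ) [NeZero n] : IsProbabilityMeasure (rootsOfUnityMeasure T n) :=
  ⟨by
    simp only [rootsOfUnityMeasure, Measure.smul_apply, Measure.coe_finsetSum, Finset.sum_apply,
      measure_univ, Finset.sum_const, Finset.card_range, nsmul_eq_mul, mul_one, smul_eq_mul]
    exact ENNReal.inv_mul_cancel (Nat.cast_ne_zero.2 (NeZero.ne n)) (ENNReal.natCast_ne_top n)⟩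

theorem integral_rootsOfUnityMeasure {T : ℝ} (f : AddCircle T → ℝ) (n : ℕ) :
    ∫ z, f z ∂rootsOfUnityMeasure T n = (∑ k ∈ Finset.range n, f (k * T / n : ℝ)) / n := by
  rw [rootsOfUnityMeasure, integral_smul_measure,
    integral_finsetSum_measure fun k _ => integrable_dirac enorm_lt_top]
  simp [integral_dirac, div_eq_inv_mul]

variable {T : ℝ} [hT : Fact (0 < T)]

instance : NullSingletonClass (haarAddCircle : Measure (AddCircle T)) where
  measure_singleton x := by
    have h := volume_closedBall T (x := x) 0
    rw [Metric.closedBall_zero, volume_eq_smul_haarAddCircle, Measure.smul_apply, smul_eq_mul,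
      mul_zero, min_eq_right hT.out.le, ENNReal.ofReal_zero] at h
    exact (mul_eq_zero.1 h).resolve_left (ENNReal.ofReal_pos.2 hT.out).ne'

theorem tendsto_integral_rootsOfUnityMeasure {f : AddCircle T → ℝ} (hf : Continuous f) :
    Tendsto (fun n => ∫ z, f z ∂rootsOfUnityMeasure T n) atTop
      (𝓝 (∫ z, f z ∂haarAddCircle)) := by
  have hf' : Continuous fun t : ℝ => f t := hf.comp continuous_quotient_mk'
  have h := (tendsto_riemannSum_of_continuousOn hT.out.le hf'.continuousOn).const_mul T⁻¹
  simp only [integral_rootsOfUnityMeasure, integral_haarAddCircle, smul_eq_mul,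
    ← AddCircle.intervalIntegral_preimage T 0, zero_add]
  refine h.congr fun n => ?_
  simp only [sub_zero, zero_add, ← mul_div_assoc]
  field_simp
  exact mul_div_mul_left _ _ hT.out.ne'

theorem tendsto_rootsOfUnityMeasure :
    Tendsto (β := ProbabilityMeasure (AddCircle T))
      (fun n : ℕ => ⟨rootsOfUnityMeasure T (n + 1), inferInstance⟩) atTop
      (𝓝 ⟨haarAddCircle, inferInstance⟩) :=
  ProbabilityMeasure.tendsto_iff_forall_integral_tendsto.2 fun f =>
    (tendsto_add_atTop_iff_nat 1).2 (tendsto_integral_rootsOfUnityMeasure f.continuous)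

end AddCircle

theorem stmt6 (Λ : AddCircle (2 * Real.pi) → ℕ)
    (hmeas : Measurable Λ) (C : ℕ) (hbd : ∀ z, Λ z ≤ C)
    (S : Finset (AddCircle (2 * Real.pi)))
    (hcont : ∀ z ∉ S, ContinuousAt (fun w => (Λ w : ℝ)) z) :
    Filter.Tendsto
      (fun n : ℕ =>
        (∑ k ∈ Finset.range n,
          (Λ ((((k : ℝ) * (2 * Real.pi) / n : ℝ) : AddCircle (2 * Real.pi))) : ℝ)) / n)
      Filter.atTop
      (nhds ((1 / (2 * Real.pi)) * ∫ z, (Λ z : ℝ))) := by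
  have hΛ : ∀ᵐ z ∂(AddCircle.haarAddCircle : Measure (AddCircle (2 * Real.pi))),
      ContinuousAt Λ z := by
    have hsub : {z | ¬ContinuousAt Λ z} ⊆ S := fun z hz => by
      by_contra hzS
      exact hz (Nat.isClosedEmbedding_coe_real.isInducing.continuousAt_iff.2 (hcont z hzS))
    exact ae_iff.2 (measure_mono_null hsub (S.finite_toSet.measure_zero _))
  have h := ProbabilityMeasure.tendsto_integral_natCast_of_ae_continuousAt
    AddCircle.tendsto_rootsOfUnityMeasure hmeas hbd hΛ
  rw [← tendsto_add_atTop_iff_nat 1]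
  simpa [AddCircle.integral_rootsOfUnityMeasure, AddCircle.integral_haarAddCircle] using h
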